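/- Nishimori identity for the coupling: for every bond b ∈ B, the quenched average of the Gibbs expectation of j_b S_b equals the Nishimori-line parameter, i.e. [⟨j_b S_b⟩] = x_b. -/

import Mathlib

open MeasureTheory ProbabilityTheory Filter

noncomputable section

/-- The real value ±1 of a Boolean spin. -/
def spin (s : Bool) : ℝ := if s then 1 else -1

/-- The bond spin `S_b = S_n S_{n'}` for a bond `b` with endpoints `ep b = (n, n')`. -/
def bondSpin {V ι : Type*} (ep : ι → V × V) (S : V → Bool) (b : ι) : ℝ :=
  spin (S (ep b).1) * spin (S (ep b).2)

/-- The potential `U(j, S) = Σ_b x_b j_b S_b`. -/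
def potential {V ι : Type*} [Fintype ι] (ep : ι → V × V) (x j : ι → ℝ)
    (S : V → Bool) : ℝ :=
  ∑ b, x b * j b * bondSpin ep S b

/-- The partition function `Z(j) = Σ_S exp U(j,S)`. -/
def partitionFn {V ι : Type*} [Fintype V] [DecidableEq V] [Fintype ι]
    (ep : ι → V × V) (x j : ι → ℝ) : ℝ :=
  ∑ S : V → Bool, Real.exp (potential ep x j S)

/-- The Boltzmann–Gibbs expectation `⟨f⟩` at fixed disorder `j`. -/
def gibbs {V ι : Type*} [Fintype V] [DecidableEq V] [Fintype ι]
    (ep : ι → V × V) (x j : ι → ℝ) (f : (V → Bool) → ℝ) : ℝ :=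
  (∑ S : V → Bool, f S * Real.exp (potential ep x j S)) / partitionFn ep x j

/-- The law of the couplings: independent Gaussians, `j_b` of mean `x_b` and variance 1. -/
def couplings {ι : Type*} [Fintype ι] (x : ι → ℝ) : Measure (ι → ℝ) :=
  Measure.pi fun b => gaussianReal (x b) 1

/-- The quenched average `[F]`. -/
def quenched {ι : Type*} [Fintype ι] (x : ι → ℝ) (F : (ι → ℝ) → ℝ) : ℝ :=
  ∫ j, F j ∂(couplings x)

/-- The quenched pressure `P({x}) = [ln Z]`. -/
def pressure {V ι : Type*} [Fintype V] [DecidableEq V] [Fintype ι]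
    (ep : ι → V × V) (x : ι → ℝ) : ℝ :=
  quenched x fun j => Real.log (partitionFn ep x j)

/-! Flipping the couplings along a gauge `τ : V → Bool`, `j_c ↦ τ_c j_c` with `τ_c = τ_n τ_{n'}`,
leaves `j ↦ ⟨j_b S_b⟩` invariant (substitute `S ↦ Sτ` in the Gibbs sums), while on the Nishimori
line it turns the law of `j` into the same law with density `exp (U(j,τ) - Σ_c x_c j_c)`.
Averaging over the `2^|V|` gauges thus multiplies the quenched measure by `Z(j) e^{-Σ_c x_c j_c}`,
which cancels the Gibbs denominator:
`2^|V| [⟨j_b S_b⟩] = Σ_S [j_b S_b e^{U(j,S) - Σ_c x_c j_c}]`, and by the same change of variables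
(with `τ = S`) every summand equals `[j_b] = x_b`. -/

open Real
open scoped ENNReal NNReal

lemma gaussianPDFReal_mul_exp (m a : ℝ) {v : ℝ≥0} (hv : v ≠ 0) (t : ℝ) :
    gaussianPDFReal m v t * exp ((a * t - a * m - a ^ 2 / 2) / v) =
      gaussianPDFReal (m + a) v t := by
  have hv' : (v : ℝ) ≠ 0 := by exact_mod_cast hv
  rw [gaussianPDFReal, gaussianPDFReal, mul_assoc, ← exp_add]
  congr 2
  field_simp
  ring

lemma gaussianReal_add_eq_withDensity (m a : ℝ) {v : ℝ≥0} (hv : v ≠ 0) :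
    gaussianReal (m + a) v = (gaussianReal m v).withDensity
      fun t => ENNReal.ofReal (exp ((a * t - a * m - a ^ 2 / 2) / v)) := by
  rw [gaussianReal_of_var_ne_zero _ hv, gaussianReal_of_var_ne_zero _ hv,
    ← withDensity_mul _ (measurable_gaussianPDF _ _) (by fun_prop)]
  congr 1
  funext t
  simp only [gaussianPDF_def, Pi.mul_apply]
  rw [← ENNReal.ofReal_mul (gaussianPDFReal_nonneg _ _ _),
    gaussianPDFReal_mul_exp m a hv]

lemma gaussianReal_mul_eq_withDensity {s : ℝ} (hs : s ^ 2 = 1) (m : ℝ) {v : ℝ≥0} (hv : v ≠ 0) :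
    gaussianReal (s * m) v = (gaussianReal m v).withDensity
      fun t => ENNReal.ofReal (exp ((s - 1) * m * t / v)) := by
  have hsm : s * m = m + (s - 1) * m := by ring
  rw [hsm, gaussianReal_add_eq_withDensity m _ hv]
  congr with t
  congr 3
  linear_combination (-(m ^ 2) / 2) * hs

lemma MeasureTheory.Measure.pi_withDensity {ι : Type*} [Fintype ι] {Ω : ι → Type*}
    [∀ i, MeasurableSpace (Ω i)] (μ : ∀ i, Measure (Ω i)) [∀ i, IsProbabilityMeasure (μ i)]
    {f : ∀ i, Ω i → ℝ≥0∞} (hf : ∀ i, Measurable (f i))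
    [∀ i, SigmaFinite ((μ i).withDensity (f i))] :
    Measure.pi (fun i => (μ i).withDensity (f i)) =
      (Measure.pi μ).withDensity fun ω => ∏ i, f i (ω i) := by
  refine Measure.pi_eq fun s hs => ?_
  have hbox : (Set.univ.pi s).indicator (fun ω => ∏ i, f i (ω i)) =
      fun ω => ∏ i, (s i).indicator (f i) (ω i) := by
    funext ω
    by_cases h : ∀ i, ω i ∈ s i
    · rw [Set.indicator_of_mem (Set.mem_univ_pi.2 h)]
      exact Finset.prod_congr rfl fun i _ => (Set.indicator_of_mem (h i) _).symm
    · obtain ⟨i, hi⟩ := not_forall.1 h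
      rw [Set.indicator_of_notMem (mt Set.mem_univ_pi.1 h)]
      exact (Finset.prod_eq_zero (Finset.mem_univ i) (Set.indicator_of_notMem hi _)).symm
  rw [withDensity_apply _ (MeasurableSet.univ_pi hs), ← lintegral_indicator
    (MeasurableSet.univ_pi hs), hbox, lintegral_prod_eq_prod_lintegral_of_indepFun _ _
    (iIndepFun_pi fun i => ((hf i).indicator (hs i)).aemeasurable)
    fun i => ((hf i).indicator (hs i)).comp (measurable_pi_apply i)]
  refine Finset.prod_congr rfl fun i _ => ?_
  rw [(measurePreserving_eval μ i).lintegral_comp ((hf i).indicator (hs i)),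
    lintegral_indicator (hs i), withDensity_apply _ (hs i)]

section Couplings

variable {ι : Type*} [Fintype ι]

lemma integrable_eval_couplings (x : ι → ℝ) (i : ι) :
    Integrable (fun j => j i) (couplings x) :=
  integrable_eval ((memLp_id_gaussianReal 1).integrable le_rfl)

lemma integral_eval_couplings (x : ι → ℝ) (i : ι) : ∫ j, j i ∂couplings x = x i := by
  rw [couplings, integral_eval, integral_id_gaussianReal]

lemma map_mul_couplings {s : ι → ℝ} (hs : ∀ i, s i ^ 2 = 1) (x : ι → ℝ) :
    (couplings x).map (fun j i => s i * j i) =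
      (couplings x).withDensity fun j => ENNReal.ofReal (exp (∑ i, (s i - 1) * x i * j i)) := by
  have hpres : MeasurePreserving (fun j i => s i * j i) (couplings x)
      (couplings fun i => s i * x i) :=
    measurePreserving_pi _ _ fun i => ⟨measurable_const_mul _, by
      rw [gaussianReal_map_const_mul]
      congr
      ext
      simp [hs i]⟩
  have hdens (i : ι) := gaussianReal_mul_eq_withDensity (hs i) (x i) one_ne_zero
  have (i : ι) : SigmaFinite ((gaussianReal (x i) 1).withDensity
      fun t => ENNReal.ofReal (exp ((s i - 1) * x i * t / (1 : ℝ≥0)))) := by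
    rw [← hdens i]
    infer_instance
  rw [hpres.map_eq, couplings, couplings, funext hdens,
    Measure.pi_withDensity _ fun i => by fun_prop]
  congr with j
  rw [← ENNReal.ofReal_prod_of_nonneg fun i _ => (exp_pos _).le, ← exp_sum]
  simp

def mulSignsEquiv {s : ι → ℝ} (hs : ∀ i, s i ^ 2 = 1) : (ι → ℝ) ≃ᵐ (ι → ℝ) :=
  MeasurableEquiv.piCongrRight fun i =>
    MeasurableEquiv.mulLeft₀ (s i) fun h => by simpa [h] using hs i

lemma integral_comp_mul_couplings {s : ι → ℝ} (hs : ∀ i, s i ^ 2 = 1) (x : ι → ℝ)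
    (g : (ι → ℝ) → ℝ) :
    ∫ j, g (fun i => s i * j i) ∂couplings x =
      ∫ j, exp (∑ i, (s i - 1) * x i * j i) * g j ∂couplings x := by
  have hmap : (couplings x).map (mulSignsEquiv hs) = _ := map_mul_couplings hs x
  rw [show (fun j => g fun i => s i * j i) = fun j => g (mulSignsEquiv hs j) from rfl,
    ← integral_map_equiv (mulSignsEquiv hs) g, hmap,
    integral_withDensity_eq_integral_toReal_smul (by fun_prop)
      (.of_forall fun _ => ENNReal.ofReal_lt_top)]
  simp_rw [ENNReal.toReal_ofReal (exp_pos _).le, smul_eq_mul]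

lemma MeasureTheory.Integrable.exp_mul_of_comp_mul_couplings {s : ι → ℝ} {x : ι → ℝ}
    {g : (ι → ℝ) → ℝ} (hg : Integrable (fun j => g (fun i => s i * j i)) (couplings x))
    (hs : ∀ i, s i ^ 2 = 1) :
    Integrable (fun j => exp (∑ i, (s i - 1) * x i * j i) * g j) (couplings x) := by
  have hmap : (couplings x).map (mulSignsEquiv hs) = _ := map_mul_couplings hs x
  rw [show (fun j => g fun i => s i * j i) = g ∘ mulSignsEquiv hs from rfl,
    ← integrable_map_equiv (mulSignsEquiv hs), hmap,
    integrable_withDensity_iff_integrable_smul' (by fun_prop)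
      (.of_forall fun _ => ENNReal.ofReal_lt_top)] at hg
  simpa only [ENNReal.toReal_ofReal (exp_pos _).le, smul_eq_mul] using hg

end Couplings

lemma spin_beq (a c : Bool) : spin (a == c) = spin a * spin c := by
  cases a <;> cases c <;> simp [spin]

section Gauge

variable {V ι : Type*}

lemma bondSpin_sq (ep : ι → V × V) (S : V → Bool) (c : ι) : bondSpin ep S c ^ 2 = 1 := by
  unfold bondSpin spin
  split_ifs <;> norm_num

lemma abs_bondSpin (ep : ι → V × V) (S : V → Bool) (c : ι) : |bondSpin ep S c| = 1 := by
  unfold bondSpin spin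
  split_ifs <;> norm_num

def gaugeSpin (τ : V → Bool) : Equiv.Perm (V → Bool) :=
  Function.Involutive.toPerm (fun S n => S n == τ n) fun S => funext fun n => by simp

lemma gaugeSpin_apply (τ S : V → Bool) (n : V) : gaugeSpin τ S n = (S n == τ n) := rfl

lemma bondSpin_gaugeSpin (ep : ι → V × V) (τ S : V → Bool) (c : ι) :
    bondSpin ep (gaugeSpin τ S) c = bondSpin ep S c * bondSpin ep τ c := by
  simp only [bondSpin, gaugeSpin_apply, spin_beq]
  ring

lemma potential_gauge [Fintype ι] (ep : ι → V × V) (x j : ι → ℝ) (τ S : V → Bool) :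
    potential ep x (fun c => bondSpin ep τ c * j c) S = potential ep x j (gaugeSpin τ S) := by
  simp only [potential, bondSpin_gaugeSpin]
  exact Finset.sum_congr rfl fun c _ => by ring

lemma exp_sum_bondSpin_sub_one [Fintype ι] (ep : ι → V × V) (x j : ι → ℝ) (S : V → Bool) :
    exp (∑ c, (bondSpin ep S c - 1) * x c * j c) =
      exp (potential ep x j S) * exp (-∑ c, x c * j c) := by
  rw [← exp_add, potential, ← Finset.sum_neg_distrib, ← Finset.sum_add_distrib]
  exact congrArg exp (Finset.sum_congr rfl fun c _ => by ring)

variable [Fintype V] [DecidableEq V] [Fintype ι]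

lemma partitionFn_pos (ep : ι → V × V) (x j : ι → ℝ) : 0 < partitionFn ep x j :=
  Finset.sum_pos (fun _ _ => exp_pos _) Finset.univ_nonempty

lemma partitionFn_mul_gibbs (ep : ι → V × V) (x j : ι → ℝ) (f : (V → Bool) → ℝ) :
    partitionFn ep x j * gibbs ep x j f = ∑ S, f S * exp (potential ep x j S) :=
  mul_div_cancel₀ _ (partitionFn_pos ep x j).ne'

lemma abs_gibbs_le (ep : ι → V × V) (x j : ι → ℝ) {f : (V → Bool) → ℝ} {C : ℝ}
    (hf : ∀ S, |f S| ≤ C) : |gibbs ep x j f| ≤ C := by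
  have hZ := partitionFn_pos ep x j
  rw [gibbs, abs_div, abs_of_pos hZ, div_le_iff₀ hZ, partitionFn, Finset.mul_sum]
  refine (Finset.abs_sum_le_sum_abs _ _).trans (Finset.sum_le_sum fun S _ => ?_)
  rw [abs_mul, abs_exp]
  exact mul_le_mul_of_nonneg_right (hf S) (exp_pos _).le

lemma gibbs_gauge (ep : ι → V × V) (x j : ι → ℝ) (τ : V → Bool) (f : (V → Bool) → ℝ) :
    gibbs ep x (fun c => bondSpin ep τ c * j c) f = gibbs ep x j (f ∘ gaugeSpin τ) := by
  have hinv (S : V → Bool) : gaugeSpin τ (gaugeSpin τ S) = S := (gaugeSpin τ).symm_apply_apply S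
  simp only [gibbs, partitionFn, potential_gauge, Function.comp_apply]
  rw [Equiv.sum_comp (gaugeSpin τ) fun S => exp (potential ep x j S),
    ← Equiv.sum_comp (gaugeSpin τ) fun S => f (gaugeSpin τ S) * exp (potential ep x j S)]
  simp only [hinv]

lemma sum_exp_mul_gibbs (ep : ι → V × V) (x j : ι → ℝ) (f : (V → Bool) → ℝ) :
    (∑ τ : V → Bool, exp (∑ c, (bondSpin ep τ c - 1) * x c * j c)) * gibbs ep x j f =
      ∑ S, exp (∑ c, (bondSpin ep S c - 1) * x c * j c) * f S := by
  simp only [exp_sum_bondSpin_sub_one, ← Finset.sum_mul]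
  rw [mul_right_comm, ← partitionFn, partitionFn_mul_gibbs, Finset.sum_mul]
  exact Finset.sum_congr rfl fun S _ => by ring

end Gauge

section Nishimori

variable {V ι : Type*} [Fintype V] [DecidableEq V] [Fintype ι]

lemma card_mul_integral_of_gauge_invariant (ep : ι → V × V) (x : ι → ℝ)
    {F : (ι → ℝ) → ℝ} (hF : ∀ τ j, F (fun c => bondSpin ep τ c * j c) = F j)
    (hint : Integrable F (couplings x)) :
    (Fintype.card (V → Bool) : ℝ) * ∫ j, F j ∂couplings x =
      ∫ j, (∑ τ : V → Bool, exp (∑ c, (bondSpin ep τ c - 1) * x c * j c)) * F j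
        ∂couplings x := by
  have hτ (τ : V → Bool) : ∫ j, exp (∑ c, (bondSpin ep τ c - 1) * x c * j c) * F j
      ∂couplings x = ∫ j, F j ∂couplings x := by
    rw [← integral_comp_mul_couplings (bondSpin_sq ep τ)]
    simp only [hF]
  have hint' (τ : V → Bool) :
      Integrable (fun j => F fun c => bondSpin ep τ c * j c) (couplings x) :=
    hint.congr (.of_forall fun j => (hF τ j).symm)
  simp only [Finset.sum_mul]
  rw [integral_finsetSum _ fun τ _ => (hint' τ).exp_mul_of_comp_mul_couplings (bondSpin_sq ep τ)]
  simp [hτ]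

lemma integral_sum_exp_mul_coupling (ep : ι → V × V) (x : ι → ℝ) (b : ι) :
    ∫ j, ∑ S : V → Bool,
        exp (∑ c, (bondSpin ep S c - 1) * x c * j c) * (j b * bondSpin ep S b) ∂couplings x =
      Fintype.card (V → Bool) * x b := by
  have hunflip (S : V → Bool) (j : ι → ℝ) : bondSpin ep S b * j b * bondSpin ep S b = j b := by
    linear_combination j b * bondSpin_sq ep S b
  have hS (S : V → Bool) :=
    integral_comp_mul_couplings (bondSpin_sq ep S) x fun j => j b * bondSpin ep S b
  simp only [hunflip, integral_eval_couplings] at hS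
  have hint (S : V → Bool) : Integrable
      (fun j => bondSpin ep S b * j b * bondSpin ep S b) (couplings x) := by
    simpa only [hunflip] using integrable_eval_couplings x b
  rw [integral_finsetSum _ fun S _ => (hint S).exp_mul_of_comp_mul_couplings (bondSpin_sq ep S)]
  simp [← hS]

lemma gibbs_coupling_gauge (ep : ι → V × V) (x : ι → ℝ) (b : ι) (τ : V → Bool) (j : ι → ℝ) :
    gibbs ep x (fun c => bondSpin ep τ c * j c)
        (fun S => bondSpin ep τ b * j b * bondSpin ep S b) =
      gibbs ep x j (fun S => j b * bondSpin ep S b) := by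
  rw [gibbs_gauge]
  congr with S
  simp only [Function.comp_apply, bondSpin_gaugeSpin]
  linear_combination j b * bondSpin ep S b * bondSpin_sq ep τ b

lemma integrable_gibbs_coupling (ep : ι → V × V) (x : ι → ℝ) (b : ι) :
    Integrable (fun j => gibbs ep x j (fun S => j b * bondSpin ep S b)) (couplings x) := by
  refine (integrable_eval_couplings x b).abs.mono' ?_ (.of_forall fun j => ?_)
  · refine Measurable.aestronglyMeasurable ?_
    unfold gibbs partitionFn potential
    fun_prop
  · refine abs_gibbs_le ep x j fun S => ?_
    rw [abs_mul, abs_bondSpin, mul_one]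

end Nishimori

theorem nishimori_coupling_identity_general
    {V ι : Type*} [Fintype V] [DecidableEq V] [Fintype ι]
    (ep : ι → V × V)
    (x : ι → ℝ) (b : ι) :
    quenched x (fun j => gibbs ep x j (fun S => j b * bondSpin ep S b)) = x b := by
  have hcard : (Fintype.card (V → Bool) : ℝ) ≠ 0 := by positivity
  refine mul_left_cancel₀ hcard ?_
  rw [quenched, card_mul_integral_of_gauge_invariant ep x (gibbs_coupling_gauge ep x b)
    (integrable_gibbs_coupling ep x b)]
  simp only [sum_exp_mul_gibbs]
  exact integral_sum_exp_mul_coupling ep x b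

/-- Nishimori identity for the coupling: on the Nishimori line,
for every bond `b`, the quenched average of the Gibbs expectation of `j_b S_b`
equals the parameter `x_b`:  `[⟨j_b S_b⟩] = x_b`. -/
theorem nishimori_coupling_identity
    {V ι : Type*} [Fintype V] [DecidableEq V] [Fintype ι]
    (ep : ι → V × V) (hep : ∀ b, (ep b).1 ≠ (ep b).2)
    (x : ι → ℝ) (hx : ∀ b, 0 ≤ x b) (b : ι) :
    quenched x (fun j => gibbs ep x j (fun S => j b * bondSpin ep S b)) = x b :=
  nishimori_coupling_identity_general ep x b

end
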